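/- In the presented group P₄ = ⟨x, y | x⁴, y², (xy)⁴⟩, the elements t₁ = x² y⁻¹ and t₂ = x y⁻¹ x commute, the subgroup they generate is a normal subgroup of P₄, and this subgroup is isomorphic to ℤ × ℤ (free abelian of rank 2). -/

import Mathlib

/-- Relators of `P₄ = ⟨x, y | x⁴, y², (xy)⁴⟩`, the fundamental group of `S²(2,4,4)`. -/
def relsP4 : Set (FreeGroup (Fin 2)) :=
  {(FreeGroup.of 0) ^ 4, (FreeGroup.of 1) ^ 2, (FreeGroup.of 0 * FreeGroup.of 1) ^ 4}

/-- `P₄ = ⟨x, y | x⁴, y², (xy)⁴⟩`. -/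
abbrev P4 : Type := PresentedGroup relsP4

/-- The generator `x` of `P₄`. -/
def P4x : P4 := PresentedGroup.of 0

/-- The generator `y` of `P₄`. -/
def P4y : P4 := PresentedGroup.of 1

/-- The translation `t₁ = x² y⁻¹` of `P₄`. -/
def P4t1 : P4 := P4x * P4x * P4y⁻¹

/-- The translation `t₂ = x y⁻¹ x` of `P₄`. -/
def P4t2 : P4 := P4x * P4y⁻¹ * P4x

/-!
The relations force `x` to act on `t₁, t₂` by `t₁ ↦ t₂⁻¹, t₂ ↦ t₁` and `y` to invert both,
so `⟨t₁, t₂⟩` is normal; the commutation `t₁ t₂ = t₂ t₁` is a rearrangement of `(xy)⁴ = 1`.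
Mapping `P₄` onto the wallpaper group `p4` acting on `ℤ²` (with `x` a quarter turn and `y`
a half-turn) sends `t₁, t₂` to the unit translations, so `t₁ᵐ t₂ⁿ = 1` only for `m = n = 0`.
-/

section ClosurePair

variable {G : Type*} [Group G] {a b : G}

theorem Subgroup.mem_normalizer_closure_of_conj_mem {s : Set G} {g : G}
    (h₁ : ∀ t ∈ s, g * t * g⁻¹ ∈ Subgroup.closure s)
    (h₂ : ∀ t ∈ s, g⁻¹ * t * g ∈ Subgroup.closure s) :
    g ∈ Subgroup.normalizer (Subgroup.closure s : Set G) := by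
  rw [Subgroup.mem_normalizer_iff_map_conj_eq, MonoidHom.map_closure]
  refine le_antisymm (Subgroup.closure_le _ |>.2 ?_) (Subgroup.closure_le _ |>.2 fun t ht => ?_)
  · rintro _ ⟨t, ht, rfl⟩
    exact h₁ t ht
  · rw [← MonoidHom.map_closure]
    exact ⟨_, h₂ t ht, by simp [mul_assoc]⟩

def Commute.zpowPairHom (h : Commute a b) : Multiplicative ℤ × Multiplicative ℤ →* G :=
  (zpowersHom G a).noncommCoprod (zpowersHom G b) fun m n => by
    simpa only [zpowersHom_apply] using h.zpow_zpow m.toAdd n.toAdd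

theorem Commute.zpowPairHom_apply (h : Commute a b) (m n : Multiplicative ℤ) :
    h.zpowPairHom (m, n) = a ^ m.toAdd * b ^ n.toAdd := rfl

theorem Commute.range_zpowPairHom (h : Commute a b) :
    h.zpowPairHom.range = Subgroup.closure {a, b} := by
  rw [Commute.zpowPairHom, MonoidHom.noncommCoprod_range, Subgroup.range_zpowersHom,
    Subgroup.range_zpowersHom, Subgroup.zpowers_eq_closure, Subgroup.zpowers_eq_closure,
    ← Subgroup.closure_union, Set.singleton_union]

noncomputable def Commute.closurePairEquiv (h : Commute a b)
    (hinj : Function.Injective h.zpowPairHom) :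
    Subgroup.closure {a, b} ≃* Multiplicative (ℤ × ℤ) :=
  (MulEquiv.subgroupCongr h.range_zpowPairHom).symm.trans
    ((MonoidHom.ofInjective hinj).symm.trans (MulEquiv.prodMultiplicative ℤ ℤ).symm)

end ClosurePair

lemma P4x_pow_four : P4x ^ 4 = 1 :=
  (map_pow (PresentedGroup.mk relsP4) _ 4).symm.trans (PresentedGroup.one_of_mem (by simp [relsP4]))

lemma P4y_sq : P4y ^ 2 = 1 :=
  (map_pow (PresentedGroup.mk relsP4) _ 2).symm.trans (PresentedGroup.one_of_mem (by simp [relsP4]))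

lemma P4x_mul_P4y_pow_four : (P4x * P4y) ^ 4 = 1 :=
  (map_pow (PresentedGroup.mk relsP4) _ 4).symm.trans (PresentedGroup.one_of_mem (by simp [relsP4]))

lemma P4y_inv : P4y⁻¹ = P4y := inv_eq_of_mul_eq_one_right (by rw [← sq, P4y_sq])

lemma P4x_inv : P4x⁻¹ = P4x * P4x * P4x :=
  inv_eq_of_mul_eq_one_right <| by
    simpa only [pow_succ, pow_zero, one_mul, mul_assoc] using P4x_pow_four

lemma P4x_mul_P4x_inv : (P4x * P4x)⁻¹ = P4x * P4x :=
  inv_eq_of_mul_eq_one_right <| by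
    simpa only [pow_succ, pow_zero, one_mul, mul_assoc] using P4x_pow_four

lemma P4xyxyx_eq_inv : P4x * P4y * P4x * P4y * P4x = (P4y * P4x * P4y)⁻¹ :=
  eq_inv_of_mul_eq_one_left <| by
    rw [← P4x_mul_P4y_pow_four]; simp only [pow_succ, pow_zero]; group

lemma P4yxyxy_eq_inv : P4y * P4x * P4y * P4x * P4y = (P4x * P4y * P4x)⁻¹ :=
  eq_inv_of_mul_eq_one_left <| by
    calc _ = P4x⁻¹ * (P4x * P4y) ^ 4 * P4x := by simp only [pow_succ, pow_zero]; group
      _ = 1 := by rw [P4x_mul_P4y_pow_four]; group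

lemma commute_P4t1_P4t2 : Commute P4t1 P4t2 := by
  simp only [Commute, SemiconjBy, P4t1, P4t2, P4y_inv]
  calc P4x * P4x * P4y * (P4x * P4y * P4x) = P4x * (P4x * P4y * P4x * P4y * P4x) := by group
    _ = P4x * P4y⁻¹ * P4x⁻¹ * P4y⁻¹ := by rw [P4xyxyx_eq_inv]; group
    _ = P4x * P4y * P4x * (P4x * P4x * P4y) := by rw [P4y_inv, P4x_inv]; group

lemma P4x_conj_P4t1 : P4x * P4t1 * P4x⁻¹ = P4t2⁻¹ := by
  simp only [P4t1, P4t2, P4y_inv]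
  calc P4x * (P4x * P4x * P4y) * P4x⁻¹ = P4x * P4x * P4x * P4y * P4x⁻¹ := by group
    _ = P4x⁻¹ * P4y⁻¹ * P4x⁻¹ := by rw [← P4x_inv, P4y_inv]
    _ = (P4x * P4y * P4x)⁻¹ := by group

lemma P4x_conj_P4t2 : P4x * P4t2 * P4x⁻¹ = P4t1 := by
  simp only [P4t1, P4t2]; group

lemma P4x_inv_conj_P4t1 : P4x⁻¹ * P4t1 * P4x = P4t2 := by
  simp only [P4t1, P4t2]; group

lemma P4x_inv_conj_P4t2 : P4x⁻¹ * P4t2 * P4x = P4t1⁻¹ := by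
  rw [← inv_inv P4t2, ← P4x_conj_P4t1]; group

lemma P4y_conj_P4t1 : P4y * P4t1 * P4y⁻¹ = P4t1⁻¹ := by
  simp only [P4t1, P4y_inv]
  calc P4y * (P4x * P4x * P4y) * P4y = P4y * (P4x * P4x) * (P4y * P4y) := by group
    _ = P4y⁻¹ * (P4x * P4x)⁻¹ := by rw [← sq P4y, P4y_sq, mul_one, P4y_inv, P4x_mul_P4x_inv]
    _ = (P4x * P4x * P4y)⁻¹ := by group

lemma P4y_conj_P4t2 : P4y * P4t2 * P4y⁻¹ = P4t2⁻¹ := by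
  simp only [P4t2, P4y_inv]
  rw [← P4yxyxy_eq_inv]; group

lemma P4t1_mem_closure : P4t1 ∈ Subgroup.closure ({P4t1, P4t2} : Set P4) :=
  Subgroup.subset_closure (by simp)

lemma P4t2_mem_closure : P4t2 ∈ Subgroup.closure ({P4t1, P4t2} : Set P4) :=
  Subgroup.subset_closure (by simp)

lemma P4x_mem_normalizer :
    P4x ∈ Subgroup.normalizer (Subgroup.closure ({P4t1, P4t2} : Set P4) : Set P4) := by
  refine Subgroup.mem_normalizer_closure_of_conj_mem ?_ ?_ <;> rintro _ (rfl | rfl)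
  · exact P4x_conj_P4t1 ▸ inv_mem P4t2_mem_closure
  · exact P4x_conj_P4t2 ▸ P4t1_mem_closure
  · exact P4x_inv_conj_P4t1 ▸ P4t2_mem_closure
  · exact P4x_inv_conj_P4t2 ▸ inv_mem P4t1_mem_closure

lemma P4y_mem_normalizer :
    P4y ∈ Subgroup.normalizer (Subgroup.closure ({P4t1, P4t2} : Set P4) : Set P4) := by
  have h : ∀ t ∈ ({P4t1, P4t2} : Set P4),
      P4y * t * P4y⁻¹ ∈ Subgroup.closure {P4t1, P4t2} := by
    rintro _ (rfl | rfl)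
    · exact P4y_conj_P4t1 ▸ inv_mem P4t1_mem_closure
    · exact P4y_conj_P4t2 ▸ inv_mem P4t2_mem_closure
  exact Subgroup.mem_normalizer_closure_of_conj_mem h (by simpa only [P4y_inv] using h)

lemma normal_closure_P4t1_P4t2 : (Subgroup.closure ({P4t1, P4t2} : Set P4)).Normal := by
  rw [← Subgroup.normalizer_eq_top_iff, eq_top_iff, ← PresentedGroup.closure_range_of,
    Subgroup.closure_le]
  rintro _ ⟨i, rfl⟩
  fin_cases i
  exacts [P4x_mem_normalizer, P4y_mem_normalizer]

namespace P4

def quarterTurn : Equiv.Perm (ℤ × ℤ) where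
  toFun p := (p.2, -p.1)
  invFun p := (-p.2, p.1)
  left_inv _ := by simp
  right_inv _ := by simp

/-- The half-turn about `(-1/2, 0)`; this centre makes `t₁, t₂` the unit translations. -/
def halfTurn : Equiv.Perm (ℤ × ℤ) where
  toFun p := (-1 - p.1, -p.2)
  invFun p := (-1 - p.1, -p.2)
  left_inv _ := by simp
  right_inv _ := by simp

def toPerm : P4 →* Equiv.Perm (ℤ × ℤ) :=
  PresentedGroup.toGroup (f := ![quarterTurn, halfTurn]) <| by
    rintro r (rfl | rfl | rfl) <;> ext p <;> simp [pow_succ, quarterTurn, halfTurn]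

theorem toPerm_P4t1 :
    toPerm P4t1 = MulAction.toPermHom _ _ (Multiplicative.ofAdd ((1, 0) : ℤ × ℤ)) := by
  ext p <;>
    simp [P4t1, P4x, P4y, toPerm, PresentedGroup.toGroup.of, quarterTurn, halfTurn, add_comm]

theorem toPerm_P4t2 :
    toPerm P4t2 = MulAction.toPermHom _ _ (Multiplicative.ofAdd ((0, 1) : ℤ × ℤ)) := by
  ext p <;>
    simp [P4t2, P4x, P4y, toPerm, PresentedGroup.toGroup.of, quarterTurn, halfTurn, add_comm]

end P4

theorem injective_zpowPairHom_P4t1_P4t2 :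
    Function.Injective commute_P4t1_P4t2.zpowPairHom := by
  refine (injective_iff_map_eq_one _).2 fun ⟨m, n⟩ h => ?_
  have h0 := congr(P4.toPerm $h (0, 0))
  rw [Commute.zpowPairHom_apply, map_mul, map_zpow, map_zpow, P4.toPerm_P4t1, P4.toPerm_P4t2,
    ← map_zpow (MulAction.toPermHom _ _), ← map_zpow (MulAction.toPermHom _ _), ← map_mul] at h0
  simpa [← ofAdd_zsmul, ← ofAdd_add, Prod.ext_iff] using h0

/-- In `P₄`, the translations `t₁ = x² y⁻¹` and `t₂ = x y⁻¹ x` commute, generate a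
normal subgroup, and this subgroup is free abelian of rank 2. -/
theorem stmt14 :
    Commute P4t1 P4t2 ∧
    (Subgroup.closure ({P4t1, P4t2} : Set P4)).Normal ∧
    Nonempty ((Subgroup.closure ({P4t1, P4t2} : Set P4)) ≃* Multiplicative (ℤ × ℤ)) :=
  ⟨commute_P4t1_P4t2, normal_closure_P4t1_P4t2,
    ⟨commute_P4t1_P4t2.closurePairEquiv injective_zpowPairHom_P4t1_P4t2⟩⟩
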